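/- On the three-element type {1,2,3}, the relation whose only true instance is B 1 2 3 satisfies Huntington's axioms B, C, D, and 9 but falsifies axiom A. -/
import Mathlib


def B3 : Fin 3 → Fin 3 → Fin 3 → Prop := fun a b c => (a, b, c) = (0, 1, 2)

theorem stmt3 :
    (∀ a b c : Fin 3, a ≠ b → a ≠ c → b ≠ c → (B3 b a c ∨ B3 c a b ∨ B3 a b c ∨ B3 c b a ∨ B3 a c b ∨ B3 b c a)) ∧ (∀ a x y : Fin 3, a ≠ x → a ≠ y → x ≠ y → ¬(B3 a x y ∧ B3 a y x)) ∧ (∀ a b c : Fin 3, B3 a b c → a ≠ b ∧ a ≠ c ∧ b ≠ c) ∧ (∀ a b c x : Fin 3, B3 a b c → a ≠ b → a ≠ c → a ≠ x → b ≠ c → b ≠ x → c ≠ x → (B3 a b x ∨ B3 x b c)) ∧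
    (∃ a b c : Fin 3, B3 a b c ∧ ¬ B3 c b a) := by
  refine ⟨?_, ?_, ?_, ?_, 0, 1, 2, ?_, ?_⟩ <;> simp [B3] <;> omega
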